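/- arXiv:2105.13359 — 4 statements merged into one kernel-verified Lean document; each statement's English description precedes it below -/
import Mathlib

section
/- Vanishing of off-critical string correlators (Theorem 1, part 1). Assume BDI data with n_z + n_Z ≥ 1 satisfying the generic condition. Then for every integer α with α < ω − n_z or α > ω + n_Z, and every integer N ≥ N_α, one has D_N[t_α] = 0. -/
open scoped BigOperators
open Filter

/-- The `k`-th Fourier coefficient of a symbol `t` on the unit circle. -/
noncomputable def symbolCoeff (t : ℂ → ℂ) (k : ℤ) : ℂ :=
  (1 / (2 * Real.pi)) *
    ∫ θ in (0:ℝ)..(2 * Real.pi),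
      t (Complex.exp (Complex.I * (θ : ℂ))) * Complex.exp (-(Complex.I * (k : ℂ) * (θ : ℂ)))

/-- The `N × N` Toeplitz determinant `D_N[t]` generated by the symbol `t`. -/
noncomputable def toeplitzDet (t : ℂ → ℂ) (N : ℕ) : ℂ :=
  Matrix.det (Matrix.of fun m n : Fin N => symbolCoeff t ((m : ℤ) - (n : ℤ)))

/-- The BDI string symbol `t_α`. -/
noncomputable def bdiSymbol (nP : ℤ) (nz nZ : ℕ) (z : Fin nz → ℂ) (Z : Fin nZ → ℂ)
    (α : ℤ) (w : ℂ) : ℂ :=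
  w ^ ((nz : ℤ) + (nZ : ℤ) - nP - α) * (∏ k, (-Z k))⁻¹ *
    ((∏ j, (w - z j)) * (∏ k, (w - Z k))) /
    ((∏ j, (1 - w * z j)) * (∏ k, (w - (Z k)⁻¹)))

/-!
Let `E = n_z + n_Z - n_P - α` be the power of `w` in `t_α`. If `n_Z < E ≤ N`, the polynomial
`Q(w) = w^(N-E) ∏ (w - Z_k⁻¹)` has degree `< N` and cancels the poles `Z_k⁻¹` of `t_α` inside the
disc, so that `t_α Q = w^N h` on the circle with `h` holomorphic on the closed disc. By Cauchy's
theorem the Fourier coefficients of `t_α Q` of index `< N` vanish, i.e. the coefficient vector of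
`Q` is in the kernel of the Toeplitz matrix. If `E < -n_z`, the same argument applies to
`w ↦ t_α(w⁻¹)`, whose Toeplitz matrix is the transpose and whose poles inside the disc are the
`z_j`, with `Q(w) = w^(N+E) ∏ (w - z_j)`.
-/

open Complex Metric Polynomial Finset Set

lemma ContinuousOn.continuous_comp_exp_I_mul {t : ℂ → ℂ} (ht : ContinuousOn t (sphere 0 1)) :
    Continuous fun θ : ℝ => t (exp (I * θ)) :=
  ht.comp_continuous (by fun_prop) fun θ => by simp [norm_exp_I_mul_ofReal]

lemma symbolCoeff_congr {f g : ℂ → ℂ} (h : EqOn f g (sphere 0 1)) :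
    symbolCoeff f = symbolCoeff g := by
  funext k
  unfold symbolCoeff
  congr 1
  refine intervalIntegral.integral_congr fun θ _ => ?_
  rw [h (by simp [norm_exp_I_mul_ofReal])]

lemma symbolCoeff_pow_mul (g : ℂ → ℂ) (n : ℕ) (k : ℤ) :
    symbolCoeff (fun w => w ^ n * g w) k = symbolCoeff g (k - n) := by
  unfold symbolCoeff
  congr 1
  refine intervalIntegral.integral_congr fun θ _ => ?_
  beta_reduce
  rw [← exp_nat_mul, mul_comm _ (g _), mul_assoc, ← exp_add]
  push_cast
  ring_nf

lemma symbolCoeff_const_mul (c : ℂ) (f : ℂ → ℂ) (k : ℤ) :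
    symbolCoeff (fun w => c * f w) k = c * symbolCoeff f k := by
  unfold symbolCoeff
  simp_rw [mul_assoc, intervalIntegral.integral_const_mul]
  exact (mul_left_comm _ _ _).symm

lemma symbolCoeff_sum {ι : Type*} (s : Finset ι) (f : ι → ℂ → ℂ)
    (hf : ∀ i ∈ s, ContinuousOn (f i) (sphere 0 1)) (k : ℤ) :
    symbolCoeff (fun w => ∑ i ∈ s, f i w) k = ∑ i ∈ s, symbolCoeff (f i) k := by
  unfold symbolCoeff
  have hint : ∀ i ∈ s, IntervalIntegrable
      (fun θ : ℝ => f i (exp (I * θ)) * exp (-(I * k * θ))) MeasureTheory.volume 0 (2 * Real.pi) :=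
    fun i hi => ((hf i hi).continuous_comp_exp_I_mul.mul (by fun_prop)).intervalIntegrable _ _
  simp only [sum_mul]
  rw [intervalIntegral.integral_finsetSum hint, mul_sum]

lemma symbolCoeff_mul_eval {t : ℂ → ℂ} (ht : ContinuousOn t (sphere 0 1)) {Q : ℂ[X]} {n : ℕ}
    (hn : Q.natDegree < n) (k : ℤ) :
    symbolCoeff (fun w => t w * Q.eval w) k = ∑ i ∈ range n, Q.coeff i * symbolCoeff t (k - i) := by
  calc symbolCoeff (fun w => t w * Q.eval w) k
      = symbolCoeff (fun w => ∑ i ∈ range n, Q.coeff i * (w ^ i * t w)) k := by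
        congr 1; funext w
        rw [eval_eq_sum_range' hn, mul_sum]
        exact sum_congr rfl fun i _ => by ring
    _ = _ := by
        rw [symbolCoeff_sum _ (fun i w => Q.coeff i * (w ^ i * t w))
          fun i _ => continuousOn_const.mul ((continuousOn_pow i).mul ht)]
        simp_rw [symbolCoeff_const_mul, symbolCoeff_pow_mul]

lemma symbolCoeff_eq_zero_of_differentiableOn {h : ℂ → ℂ}
    (hh : DifferentiableOn ℂ h (closedBall 0 1)) {k : ℤ} (hk : k < 0) : symbolCoeff h k = 0 := by
  obtain ⟨m, rfl⟩ : ∃ m : ℕ, k = -(m + 1) := ⟨(-k - 1).toNat, by omega⟩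
  have hcircle : (∮ w in C(0, 1), w ^ m * h w) =
      I * ∫ θ in (0:ℝ)..(2 * Real.pi), h (exp (I * θ)) * exp (-(I * ((-(m + 1) : ℤ) : ℂ) * θ)) := by
    rw [circleIntegral, ← intervalIntegral.integral_const_mul]
    refine intervalIntegral.integral_congr fun θ _ => ?_
    simp only [deriv_circleMap, circleMap, ofReal_one, zero_add, one_mul, smul_eq_mul]
    push_cast
    rw [show -(I * (-(m + 1)) * θ) = (m + 1 : ℕ) * (θ * I) by push_cast; ring, exp_nat_mul,
      mul_comm I θ]
    ring1
  have hcauchy : (∮ w in C(0, 1), w ^ m * h w) = 0 :=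
    (((differentiableOn_pow m).mul hh).mono (closure_ball (0:ℂ) one_ne_zero).le
      |>.diffContOnCl).circleIntegral_eq_zero zero_le_one
  rw [symbolCoeff, (mul_eq_zero.1 (hcircle.symm.trans hcauchy)).resolve_left I_ne_zero, mul_zero]

lemma symbolCoeff_comp_inv (t : ℂ → ℂ) (k : ℤ) :
    symbolCoeff (fun w => t w⁻¹) k = symbolCoeff t (-k) := by
  set F : ℝ → ℂ := fun θ => t (exp (I * θ)) * exp (-(I * ((-k : ℤ) : ℂ) * θ))
  have hF : Function.Periodic F (2 * Real.pi) := fun θ => by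
    simp only [F]
    rw [show I * ((θ + 2 * Real.pi : ℝ) : ℂ) = I * θ + 2 * Real.pi * I by push_cast; ring,
      show -(I * ((-k : ℤ) : ℂ) * ((θ + 2 * Real.pi : ℝ) : ℂ))
        = -(I * ((-k : ℤ) : ℂ) * θ) + k * (2 * Real.pi * I) by push_cast; ring,
      exp_add, exp_add, exp_two_pi_mul_I, exp_int_mul_two_pi_mul_I, mul_one, mul_one]
  unfold symbolCoeff
  congr 1
  calc (∫ θ in (0:ℝ)..(2 * Real.pi), t (exp (I * θ))⁻¹ * exp (-(I * k * θ)))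
      = ∫ θ in (0:ℝ)..(2 * Real.pi), F (-θ) := by
        refine intervalIntegral.integral_congr fun θ _ => ?_
        simp only [F, ← exp_neg]
        push_cast
        ring_nf
    _ = ∫ θ in (0:ℝ)..(2 * Real.pi), F θ := by
        simpa using hF.intervalIntegral_add_eq (-(2 * Real.pi)) 0

lemma toeplitzDet_comp_inv (t : ℂ → ℂ) (N : ℕ) :
    toeplitzDet (fun w => t w⁻¹) N = toeplitzDet t N := by
  rw [toeplitzDet, toeplitzDet, ← Matrix.det_transpose]
  congr 1
  ext m n
  simp [symbolCoeff_comp_inv]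

lemma toeplitzDet_eq_zero_of_mul_eval_eq_pow_mul {t h : ℂ → ℂ} {N : ℕ} {Q : ℂ[X]}
    (ht : ContinuousOn t (sphere 0 1)) (hQ : Q ≠ 0) (hQN : Q.natDegree < N)
    (hh : DifferentiableOn ℂ h (closedBall 0 1))
    (htQ : EqOn (fun w => t w * Q.eval w) (fun w => w ^ N * h w) (sphere 0 1)) :
    toeplitzDet t N = 0 := by
  rw [toeplitzDet, ← Matrix.exists_mulVec_eq_zero_iff]
  refine ⟨fun n => Q.coeff n, fun h0 => hQ ?_, funext fun m => ?_⟩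
  · exact leadingCoeff_eq_zero.1 (congrFun h0 ⟨_, hQN⟩)
  calc _ = ∑ i ∈ range N, Q.coeff i * symbolCoeff t (m - i) := by
        simp only [Matrix.mulVec, dotProduct, Matrix.of_apply, mul_comm (symbolCoeff t _)]
        exact Fin.sum_univ_eq_sum_range (fun i => Q.coeff i * symbolCoeff t (m - i)) N
    _ = symbolCoeff (fun w => w ^ N * h w) m := by
        rw [← symbolCoeff_mul_eval ht hQN, symbolCoeff_congr htQ]
    _ = 0 := by
        rw [symbolCoeff_pow_mul]
        exact symbolCoeff_eq_zero_of_differentiableOn hh (by omega)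

section Products

variable {ι 𝕜 : Type*} [Fintype ι] [NormedField 𝕜] {a : ι → 𝕜} {w : 𝕜}

lemma prod_one_sub_mul_ne_zero (ha : ∀ j, ‖a j‖ < 1) (hw : ‖w‖ ≤ 1) : ∏ j, (1 - w * a j) ≠ 0 :=
  prod_ne_zero_iff.2 fun j _ h => by
    have : ‖w * a j‖ < 1 := by
      rw [norm_mul]; exact mul_lt_one_of_nonneg_of_lt_one_right hw (norm_nonneg _) (ha j)
    rw [← sub_eq_zero.1 h, norm_one] at this
    exact this.false

lemma prod_sub_ne_zero_of_norm_eq_one (ha : ∀ j, ‖a j‖ < 1) (hw : ‖w‖ = 1) : ∏ j, (w - a j) ≠ 0 :=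
  prod_ne_zero_iff.2 fun j _ h => (ha j).ne (by rw [← sub_eq_zero.1 h, hw])

lemma prod_inv_sub (a : ι → 𝕜) (hw : w ≠ 0) :
    ∏ j, (w⁻¹ - a j) = (w ^ Fintype.card ι)⁻¹ * ∏ j, (1 - w * a j) := by
  rw [← inv_pow, ← card_univ, ← prod_const, ← prod_mul_distrib]
  exact prod_congr rfl fun j _ => by field_simp

lemma prod_one_sub_inv_mul (a : ι → 𝕜) (hw : w ≠ 0) :
    ∏ j, (1 - w⁻¹ * a j) = (w ^ Fintype.card ι)⁻¹ * ∏ j, (w - a j) := by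
  rw [← inv_pow, ← card_univ, ← prod_const, ← prod_mul_distrib]
  exact prod_congr rfl fun j _ => by field_simp

end Products

lemma norm_inv_lt_one_of_one_lt {𝕜 : Type*} [NormedDivisionRing 𝕜] {a : 𝕜} (ha : 1 < ‖a‖) :
    ‖a⁻¹‖ < 1 := by
  rw [norm_inv]; exact inv_lt_one_of_one_lt₀ ha

lemma natDegree_X_pow_mul_prod_X_sub_C {R ι : Type*} [CommRing R] [Nontrivial R] [Fintype ι]
    (s : ℕ) (a : ι → R) : (X ^ s * ∏ j, (X - C (a j))).natDegree = s + Fintype.card ι := by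
  rw [(monic_X_pow s).natDegree_mul (monic_prod_X_sub_C a _)]
  simp

section BDI

variable {nP α : ℤ} {nz nZ : ℕ} {z : Fin nz → ℂ} {Z : Fin nZ → ℂ}

lemma continuousOn_bdiSymbol (hz : ∀ j, ‖z j‖ < 1) (hZ : ∀ k, 1 < ‖Z k‖) :
    ContinuousOn (bdiSymbol nP nz nZ z Z α) (sphere 0 1) := by
  have hne : ∀ w ∈ sphere (0:ℂ) 1, w ≠ 0 := fun w hw => ne_zero_of_mem_unit_sphere ⟨w, hw⟩
  refine ContinuousOn.div ?_ (by fun_prop) fun w hw => ?_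
  · exact ((continuousOn_id.zpow₀ _ fun w hw => Or.inl (hne w hw)).mul continuousOn_const).mul
      (by fun_prop)
  · rw [mem_sphere_zero_iff_norm] at hw
    exact mul_ne_zero (prod_one_sub_mul_ne_zero hz hw.le)
      (prod_sub_ne_zero_of_norm_eq_one (fun k => norm_inv_lt_one_of_one_lt (hZ k)) hw)

lemma toeplitzDet_bdiSymbol_eq_zero_of_lt (hz : ∀ j, ‖z j‖ < 1) (hZ : ∀ k, 1 < ‖Z k‖) {N : ℕ}
    (hα : (nZ : ℤ) < nz + nZ - nP - α) (hN : (nz : ℤ) + nZ - nP - α ≤ N) :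
    toeplitzDet (bdiSymbol nP nz nZ z Z α) N = 0 := by
  obtain ⟨s, hs⟩ : ∃ s : ℕ, (nz : ℤ) + nZ - nP - α = N - s :=
    ⟨(N - (nz + nZ - nP - α)).toNat, by omega⟩
  have hZinv : ∀ k, ‖(Z k)⁻¹‖ < 1 := fun k => norm_inv_lt_one_of_one_lt (hZ k)
  refine toeplitzDet_eq_zero_of_mul_eval_eq_pow_mul (Q := X ^ s * ∏ k, (X - C (Z k)⁻¹))
    (h := fun w => (∏ k, -Z k)⁻¹ * ((∏ j, (w - z j)) * ∏ k, (w - Z k)) / ∏ j, (1 - w * z j))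
    (continuousOn_bdiSymbol hz hZ) ((monic_X_pow s).mul (monic_prod_X_sub_C _ _)).ne_zero
    (by rw [natDegree_X_pow_mul_prod_X_sub_C, Fintype.card_fin]; omega)
    ((by fun_prop : Differentiable ℂ _).differentiableOn.div (by fun_prop)
      fun w hw => prod_one_sub_mul_ne_zero hz (mem_closedBall_zero_iff.1 hw)) fun w hw => ?_
  rw [mem_sphere_zero_iff_norm] at hw
  have hw0 : w ≠ 0 := norm_ne_zero_iff.1 (by rw [hw]; exact one_ne_zero)
  have hDz := prod_one_sub_mul_ne_zero hz hw.le
  have hDZ := prod_sub_ne_zero_of_norm_eq_one hZinv hw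
  simp only [bdiSymbol, eval_mul, eval_pow, eval_X, eval_prod, eval_sub, eval_C, hs,
    zpow_sub₀ hw0, zpow_natCast]
  generalize ∏ j, (1 - w * z j) = Dz at *
  generalize ∏ k, (w - (Z k)⁻¹) = DZ at *
  field_simp

lemma toeplitzDet_bdiSymbol_eq_zero_of_lt_neg (hz : ∀ j, ‖z j‖ < 1) (hZ : ∀ k, 1 < ‖Z k‖)
    {N : ℕ} (hα : (nz : ℤ) + nZ - nP - α < -nz) (hN : -((nz : ℤ) + nZ - nP - α) ≤ N) :
    toeplitzDet (bdiSymbol nP nz nZ z Z α) N = 0 := by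
  obtain ⟨s, hs⟩ : ∃ s : ℕ, (nz : ℤ) + nZ - nP - α = s - N :=
    ⟨(N + (nz + nZ - nP - α)).toNat, by omega⟩
  have hZinv : ∀ k, ‖(Z k)⁻¹‖ < 1 := fun k => norm_inv_lt_one_of_one_lt (hZ k)
  rw [← toeplitzDet_comp_inv]
  refine toeplitzDet_eq_zero_of_mul_eval_eq_pow_mul (Q := X ^ s * ∏ j, (X - C (z j)))
    (h := fun w => (∏ k, -Z k)⁻¹ * ((∏ j, (1 - w * z j)) * ∏ k, (1 - w * Z k)) /
      ∏ k, (1 - w * (Z k)⁻¹))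
    ((continuousOn_bdiSymbol hz hZ).comp (continuousOn_inv₀.mono fun w hw => ?_) fun w hw => ?_)
    ((monic_X_pow s).mul (monic_prod_X_sub_C _ _)).ne_zero
    (by rw [natDegree_X_pow_mul_prod_X_sub_C, Fintype.card_fin]; omega)
    ((by fun_prop : Differentiable ℂ _).differentiableOn.div (by fun_prop)
      fun w hw => prod_one_sub_mul_ne_zero hZinv (mem_closedBall_zero_iff.1 hw)) fun w hw => ?_
  · exact ne_zero_of_mem_unit_sphere ⟨w, hw⟩
  · simpa using hw
  rw [mem_sphere_zero_iff_norm] at hw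
  have hw0 : w ≠ 0 := norm_ne_zero_iff.1 (by rw [hw]; exact one_ne_zero)
  have hPz := prod_sub_ne_zero_of_norm_eq_one hz hw
  have hDZ := prod_one_sub_mul_ne_zero hZinv hw.le
  simp only [bdiSymbol, eval_mul, eval_pow, eval_X, eval_prod, eval_sub, eval_C, hs,
    zpow_sub₀ (inv_ne_zero hw0), zpow_natCast, prod_inv_sub _ hw0, prod_one_sub_inv_mul _ hw0,
    Fintype.card_fin, inv_pow]
  generalize ∏ j, (w - z j) = Pz at *
  generalize ∏ k, (1 - w * (Z k)⁻¹) = DZ at *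
  field_simp

theorem bdi_string_correlator_vanishes_general
    (nP : ℤ) (nz nZ : ℕ)
    (z : Fin nz → ℂ) (Z : Fin nZ → ℂ)
    (hz : ∀ j, 0 < ‖z j‖ ∧ ‖z j‖ < 1) (hZ : ∀ k, 1 < ‖Z k‖)
    (α : ℤ)
    (hα : α < 2 * (nz : ℤ) - nP - nz ∨ 2 * (nz : ℤ) - nP + nZ < α)
    (N : ℕ) (hN : max |(nz : ℤ) + (nZ : ℤ) - nP - α| 1 ≤ (N : ℤ)) :
    toeplitzDet (bdiSymbol nP nz nZ z Z α) N = 0 := by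
  have hEN := (le_max_left _ _).trans hN
  rcases hα with hα | hα
  · exact toeplitzDet_bdiSymbol_eq_zero_of_lt (fun j => (hz j).2) hZ (by omega)
      ((le_abs_self _).trans hEN)
  · exact toeplitzDet_bdiSymbol_eq_zero_of_lt_neg (fun j => (hz j).2) hZ (by omega)
      ((neg_le_abs _).trans hEN)

/-- Theorem 1, part 1: vanishing of off-critical string correlators in class BDI. -/
theorem bdi_string_correlator_vanishes
    (nP : ℤ) (nz nZ : ℕ) (hnznZ : 1 ≤ nz + nZ)
    (z : Fin nz → ℂ) (Z : Fin nZ → ℂ)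
    (hz : ∀ j, 0 < ‖z j‖ ∧ ‖z j‖ < 1) (hZ : ∀ k, 1 < ‖Z k‖)
    (hconjz : ∃ σ : Equiv.Perm (Fin nz), ∀ j, z (σ j) = (starRingEnd ℂ) (z j))
    (hconjZ : ∃ σ : Equiv.Perm (Fin nZ), ∀ k, Z (σ k) = (starRingEnd ℂ) (Z k))
    (hgen : Function.Injective
      (Sum.elim (Sum.elim z fun j => (z j)⁻¹) (Sum.elim Z fun k => (Z k)⁻¹)))
    (α : ℤ)
    (hα : α < 2 * (nz : ℤ) - nP - nz ∨ 2 * (nz : ℤ) - nP + nZ < α)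
    (N : ℕ) (hN : max |(nz : ℤ) + (nZ : ℤ) - nP - α| 1 ≤ (N : ℤ)) :
    toeplitzDet (bdiSymbol nP nz nZ z Z α) N = 0 :=
  bdi_string_correlator_vanishes_general nP nz nZ z Z hz hZ α hα N hN
end BDI
end

section
/- Edge-case string correlators are exactly geometric (Theorem 1, edge cases). (i) Let n_z ≥ 1 and z_1,…,z_{n_z} ∈ ℂ with 0 < |z_j| < 1 for all j, and let u be the symbol u(z) = ∏_{j=1}^{n_z} (z − z_j)/(1 − z·z_j) on the unit circle. Then for every integer N ≥ 1, D_N[u] = ∏_{j=1}^{n_z} (−z_j)^N. (ii) Let n_Z ≥ 1 and Z_1,…,Z_{n_Z} ∈ ℂ with |Z_k| > 1 for all k, and let v be the symbol v(z) = ∏_{k=1}^{n_Z} (z − Z_k) / ( (−Z_k)(z − Z_k^{-1}) ) on the unit circle. Then for every integer N ≥ 1, D_N[v] = ∏_{k=1}^{n_Z} (−Z_k)^{−N}. (These are the BDI string symbols t_α at α = n_z − n_P with n_Z = 0, and at α = n_Z − n_P with n_z = 0, respectively.) -/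
open scoped BigOperators
open Filter

/-! Both symbols are boundary values of functions holomorphic on the closed unit disc, the
second one after the substitution `w ↦ w⁻¹`. By Cauchy's formula the Fourier coefficients of such
an `f` vanish at negative indices and equal `f 0` at index `0`, so its Toeplitz matrix is lower
triangular with constant diagonal `f 0`. The substitution `w ↦ w⁻¹` reverses the indices of the
coefficients and hence only transposes the Toeplitz matrix. -/

open Complex Metric

lemma symbolCoeff_eq_circleIntegral (t : ℂ → ℂ) (k : ℤ) :
    symbolCoeff t k = (2 * Real.pi * I)⁻¹ • ∮ z in C(0, 1), z⁻¹ • (z ^ (-k) * t z) := by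
  rw [symbolCoeff, circleIntegral, ← intervalIntegral.integral_const_mul,
    smul_eq_mul, ← intervalIntegral.integral_const_mul]
  refine intervalIntegral.integral_congr fun θ _ => ?_
  have hexp : exp (-(I * k * θ)) = exp (θ * I) ^ (-k) := by
    rw [← exp_int_mul]; push_cast; ring_nf
  have hne : exp (θ * I) ≠ 0 := exp_ne_zero _
  simp only [deriv_circleMap, circleMap_zero, Complex.ofReal_one, one_mul, smul_eq_mul, hexp]
  field_simp

lemma symbolCoeff_neg_natCast_of_differentiableOn {f : ℂ → ℂ}
    (hf : DifferentiableOn ℂ f (closedBall 0 1)) (m : ℕ) :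
    symbolCoeff f (-m) = 0 ^ m * f 0 := by
  have hg : DiffContOnCl ℂ (fun z => z ^ m * f z) (ball 0 1) :=
    ((differentiableOn_pow m).mul hf |>.mono closure_ball_subset_closedBall).diffContOnCl
  simpa [symbolCoeff_eq_circleIntegral] using
    hg.two_pi_i_inv_smul_circleIntegral_sub_inv_smul (mem_ball_self one_pos)

lemma symbolCoeff_eq_neg_of_eqOn_inv {s t : ℂ → ℂ} (h : ∀ w : ℂ, ‖w‖ = 1 → s w = t w⁻¹)
    (k : ℤ) : symbolCoeff s k = symbolCoeff t (-k) := by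
  have hsub := intervalIntegral.integral_comp_sub_left (a := 0) (b := 2 * Real.pi)
    (fun θ : ℝ => t (exp (I * θ)) * exp (-(I * ((-k : ℤ) : ℂ) * θ))) (2 * Real.pi)
  rw [sub_self, sub_zero] at hsub
  rw [symbolCoeff, symbolCoeff, ← hsub]
  congr 1
  refine intervalIntegral.integral_congr fun θ _ => ?_
  have hinv : exp (I * ((2 * Real.pi - θ : ℝ) : ℂ)) = (exp (I * θ))⁻¹ := by
    rw [← exp_neg, show I * ((2 * Real.pi - θ : ℝ) : ℂ) = -(I * θ) + 2 * Real.pi * I by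
      push_cast; ring, exp_add, exp_two_pi_mul_I, mul_one]
  have hexp : exp (-(I * ((-k : ℤ) : ℂ) * ((2 * Real.pi - θ : ℝ) : ℂ))) = exp (-(I * k * θ)) := by
    rw [show -(I * ((-k : ℤ) : ℂ) * ((2 * Real.pi - θ : ℝ) : ℂ))
        = -(I * k * θ) + k * (2 * Real.pi * I) by push_cast; ring,
      exp_add, exp_int_mul_two_pi_mul_I, mul_one]
  rw [hinv, hexp, h _ (by rw [mul_comm, norm_exp_ofReal_mul_I])]

lemma toeplitzDet_eq_of_symbolCoeff_eq_neg {s t : ℂ → ℂ}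
    (h : ∀ k : ℤ, symbolCoeff s k = symbolCoeff t (-k)) (N : ℕ) :
    toeplitzDet s N = toeplitzDet t N := by
  rw [toeplitzDet, ← Matrix.det_transpose]
  congr 1
  ext m n
  simp [h]

lemma toeplitzDet_eq_pow_of_differentiableOn {f : ℂ → ℂ}
    (hf : DifferentiableOn ℂ f (closedBall 0 1)) (N : ℕ) : toeplitzDet f N = f 0 ^ N := by
  rw [toeplitzDet, Matrix.det_of_isLowerTriangular]
  · simpa using congrArg (· ^ N) (symbolCoeff_neg_natCast_of_differentiableOn hf 0)
  · intro m n (hmn : m < n)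
    obtain ⟨d, hd⟩ : ∃ d : ℕ, (n : ℤ) - m = d + 1 := ⟨n - m - 1, by omega⟩
    simp only [Matrix.of_apply, show (m : ℤ) - n = -(d + 1 : ℕ) by push_cast; omega,
      symbolCoeff_neg_natCast_of_differentiableOn hf, pow_succ, mul_zero, zero_mul]

lemma toeplitzDet_prod_of_norm_lt_one {ι : Type*} [Fintype ι] (z : ι → ℂ) (hz : ∀ j, ‖z j‖ < 1)
    (N : ℕ) : toeplitzDet (fun w => ∏ j, (w - z j) / (1 - w * z j)) N = ∏ j, (-z j) ^ N := by
  have hu : DifferentiableOn ℂ (fun w => ∏ j, (w - z j) / (1 - w * z j)) (closedBall 0 1) := by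
    refine DifferentiableOn.fun_finsetProd fun j _ => ?_
    refine DifferentiableOn.div (by fun_prop) (by fun_prop) fun w hw => ?_
    have hwz : ‖w * z j‖ < ‖(1 : ℂ)‖ := by
      rw [norm_mul, norm_one]
      exact mul_lt_one_of_nonneg_of_lt_one_right (mem_closedBall_zero_iff.mp hw)
        (norm_nonneg _) (hz j)
    exact sub_ne_zero.mpr (ne_of_apply_ne norm hwz.ne')
  rw [toeplitzDet_eq_pow_of_differentiableOn hu, ← Finset.prod_pow]
  simp

lemma sub_div_neg_mul_sub_inv_eq {w a : ℂ} (hw : w ≠ 0) (ha : a ≠ 0) :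
    (w - a) / (-a * (w - a⁻¹)) = (1 - a * w⁻¹) / (w⁻¹ - a) := by
  rw [show w - a = w * (1 - a * w⁻¹) by field_simp,
    show -a * (w - a⁻¹) = w * (w⁻¹ - a) by field_simp; ring, mul_div_mul_left _ _ hw]

lemma toeplitzDet_prod_of_one_lt_norm {ι : Type*} [Fintype ι] (Z : ι → ℂ) (hZ : ∀ k, 1 < ‖Z k‖)
    (N : ℕ) : toeplitzDet (fun w => ∏ k, (w - Z k) / (-Z k * (w - (Z k)⁻¹))) N
      = ∏ k, (-Z k) ^ (-(N : ℤ)) := by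
  set V : ℂ → ℂ := fun w => ∏ k, (1 - Z k * w) / (w - Z k)
  have hZ0 : ∀ k, Z k ≠ 0 := fun k => norm_pos_iff.mp (one_pos.trans (hZ k))
  have hV : DifferentiableOn ℂ V (closedBall 0 1) := by
    refine DifferentiableOn.fun_finsetProd fun k _ => ?_
    refine DifferentiableOn.div (by fun_prop) (by fun_prop) fun w hw => ?_
    have hwZ : ‖w‖ < ‖Z k‖ := (mem_closedBall_zero_iff.mp hw).trans_lt (hZ k)
    exact sub_ne_zero.mpr (ne_of_apply_ne norm hwZ.ne)
  have hreflect : ∀ w : ℂ, ‖w‖ = 1 → ∏ k, (w - Z k) / (-Z k * (w - (Z k)⁻¹)) = V w⁻¹ :=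
    fun w hw => Finset.prod_congr rfl fun k _ =>
      sub_div_neg_mul_sub_inv_eq (norm_pos_iff.mp (hw ▸ one_pos)) (hZ0 k)
  rw [toeplitzDet_eq_of_symbolCoeff_eq_neg (symbolCoeff_eq_neg_of_eqOn_inv hreflect),
    toeplitzDet_eq_pow_of_differentiableOn hV, ← Finset.prod_pow]
  refine Finset.prod_congr rfl fun k _ => ?_
  simp [zpow_neg, ← inv_pow]

/-- Theorem 1, edge cases: the string correlators are exactly geometric when all zeros
lie on one side of the unit circle. -/
theorem bdi_string_correlator_edge_cases :
    (∀ (nz : ℕ), 1 ≤ nz → ∀ z : Fin nz → ℂ, (∀ j, 0 < ‖z j‖ ∧ ‖z j‖ < 1) →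
      ∀ N : ℕ, 1 ≤ N →
        toeplitzDet (fun w => ∏ j, ((w - z j) / (1 - w * z j))) N
          = ∏ j, (-z j) ^ N) ∧
    (∀ (nZ : ℕ), 1 ≤ nZ → ∀ Z : Fin nZ → ℂ, (∀ k, 1 < ‖Z k‖) →
      ∀ N : ℕ, 1 ≤ N →
        toeplitzDet (fun w => ∏ k, ((w - Z k) / ((-Z k) * (w - (Z k)⁻¹)))) N
          = ∏ k, (-Z k) ^ (-(N : ℤ))) :=
  ⟨fun _ _ z hz N _ => toeplitzDet_prod_of_norm_lt_one z (fun j => (hz j).2) N,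
    fun _ _ Z hZ N _ => toeplitzDet_prod_of_one_lt_norm Z hZ N⟩
end

section
/- Lemma 1 (vanishing of degenerate contributions in the ε-limit of Day's formula). Let p, q ≥ 1 and s ≥ p + q be integers, and let 1 ≤ κ ≤ s. Let τ_1,…,τ_{s−κ} be nonzero, pairwise distinct complex numbers, let x_1,…,x_κ be nonzero, pairwise distinct complex numbers, let ρ ∈ ℂ, let δ_1,…,δ_p ∈ ℂ with |δ_m| < 1, and let γ_1,…,γ_q ∈ ℂ with |γ_l| > 1. For ε > 0 define τ_j(ε) = τ_j for 1 ≤ j ≤ s−κ and τ_{s−κ+i}(ε) = ε·x_i for 1 ≤ i ≤ κ, and for a subset M ⊆ {1,…,s} with |M| = p and all ε > 0 small enough that τ_1(ε),…,τ_s(ε) are pairwise distinct, define (with M^c = {1,…,s} ∖ M) r_M(ε) = (−1)^{s−p} ρ ∏_{k∈M^c} τ_k(ε) and C_M(ε) = [∏_{k∈M^c} ∏_{m=1}^{p} (τ_k(ε) − δ_m)] · [∏_{l=1}^{q} ∏_{j∈M} (γ_l − τ_j(ε))] · [∏_{l=1}^{q} ∏_{m=1}^{p} (γ_l − δ_m)^{-1}]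 · [∏_{k∈M^c} ∏_{j∈M} (τ_k(ε) − τ_j(ε))^{-1}]. If M^c contains at least one index in {s−κ+1,…,s}, then for every integer N ≥ κ one has lim_{ε→0⁺} C_M(ε) · r_M(ε)^N = 0. -/
open scoped BigOperators
open Filter Finset Topology

/-!
Write the zeros as `τ_k(c) = c ^ w k * u k` with weights `w k ∈ {0, 1}`. Each difference
`τ_k(c) - τ_j(c)` is `c ^ min (w k) (w j)` times a polynomial in `c` that does not vanish at `0`,
and `∏_{k ∈ Mᶜ} τ_k(c)` is `c ^ b` times a constant, where `b = ∑_{Mᶜ} w ≥ 1`. Hence the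
contribution is `c ^ (b N - m)` times a function continuous at `0`, where
`m = ∑_{k ∈ Mᶜ} ∑_{j ∈ M} min (w k) (w j) ≤ b · ∑_M w < b N` because `∑_M w + b = κ ≤ N`.
-/

theorem Nat.min_le_mul (a b : ℕ) : min a b ≤ a * b := by
  rcases Nat.eq_zero_or_pos b with rfl | hb
  · simp
  · exact (min_le_left a b).trans (Nat.le_mul_of_pos_right a hb)

theorem Finset.sum_sum_min_le_sum_mul_sum {ι : Type*} (S T : Finset ι) (w : ι → ℕ) :
    ∑ k ∈ S, ∑ j ∈ T, min (w k) (w j) ≤ (∑ k ∈ S, w k) * ∑ j ∈ T, w j := by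
  rw [sum_mul_sum]
  exact sum_le_sum fun k _ => sum_le_sum fun j _ => Nat.min_le_mul _ _

section CommRing

variable {R : Type*} [CommRing R]

theorem pow_mul_sub_pow_mul_eq (c y z : R) (a b : ℕ) :
    c ^ a * y - c ^ b * z =
      c ^ min a b * (c ^ (a - min a b) * y - c ^ (b - min a b) * z) := by
  rw [mul_sub, ← mul_assoc, ← mul_assoc, ← pow_add, ← pow_add,
    Nat.add_sub_cancel' (min_le_left a b), Nat.add_sub_cancel' (min_le_right a b)]

theorem zero_pow_tsub_min_mul_sub_ne_zero {a b : ℕ} {y z : R} (heq : a = b → y ≠ z)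
    (hlt : a < b → y ≠ 0) (hgt : b < a → z ≠ 0) :
    (0 : R) ^ (a - min a b) * y - 0 ^ (b - min a b) * z ≠ 0 := by
  rcases lt_trichotomy a b with h | rfl | h
  · simp [min_eq_left h.le, Nat.sub_ne_zero_of_lt h, hlt h]
  · simpa [sub_eq_zero] using heq rfl
  · simp [min_eq_right h.le, Nat.sub_ne_zero_of_lt h, hgt h]

theorem prod_prod_pow_mul_sub_pow_mul {ι : Type*} (S T : Finset ι) (w : ι → ℕ) (u : ι → R)
    (c : R) :
    ∏ k ∈ S, ∏ j ∈ T, (c ^ w k * u k - c ^ w j * u j) =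
      c ^ (∑ k ∈ S, ∑ j ∈ T, min (w k) (w j)) *
        ∏ k ∈ S, ∏ j ∈ T, (c ^ (w k - min (w k) (w j)) * u k -
          c ^ (w j - min (w k) (w j)) * u j) := by
  simp_rw [pow_mul_sub_pow_mul_eq c (u _) (u _) (w _) (w _), prod_mul_distrib,
    prod_pow_eq_pow_sum]

end CommRing

theorem tendsto_mul_prod_inv_sub_mul_pow_prod_nhdsNE {𝕜 ι : Type*} [NontriviallyNormedField 𝕜]
    (F : 𝕜 → 𝕜) (hF : ContinuousAt F 0)
    (S T : Finset ι) (w : ι → ℕ) (u : ι → 𝕜)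
    (hST : Disjoint S T) (hu : ∀ k j, k ≠ j → w k = w j → u k ≠ u j)
    (hu₀ : ∀ k j, w k < w j → u k ≠ 0)
    (σ : 𝕜) (N : ℕ) (hS : 1 ≤ ∑ k ∈ S, w k) (hN : ∑ j ∈ T, w j < N) :
    Tendsto (fun c : 𝕜 => F c * (∏ k ∈ S, ∏ j ∈ T, (c ^ w k * u k - c ^ w j * u j)⁻¹) *
      (σ * ∏ k ∈ S, c ^ w k * u k) ^ N) (𝓝[≠] 0) (𝓝 0) := by
  set m := ∑ k ∈ S, ∑ j ∈ T, min (w k) (w j)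
  set b := ∑ k ∈ S, w k
  set D : 𝕜 → 𝕜 := fun c => ∏ k ∈ S, ∏ j ∈ T,
    (c ^ (w k - min (w k) (w j)) * u k - c ^ (w j - min (w k) (w j)) * u j)
  have hm : m < b * N := (sum_sum_min_le_sum_mul_sum S T w).trans_lt
    (Nat.mul_lt_mul_of_pos_left hN hS)
  have hD₀ : D 0 ≠ 0 := prod_ne_zero_iff.2 fun k hk => prod_ne_zero_iff.2 fun j hj =>
    zero_pow_tsub_min_mul_sub_ne_zero (hu k j (disjoint_iff_ne.1 hST k hk j hj))
      (hu₀ k j) (hu₀ j k)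
  have hfactor : ∀ c ≠ (0 : 𝕜),
      F c * (∏ k ∈ S, ∏ j ∈ T, (c ^ w k * u k - c ^ w j * u j)⁻¹) *
        (σ * ∏ k ∈ S, c ^ w k * u k) ^ N =
      c ^ (b * N - m) * (F c * (D c)⁻¹ * (σ * ∏ k ∈ S, u k) ^ N) := by
    intro c hc
    have hpow : c ^ (b * N) = c ^ (b * N - m) * c ^ m := by
      rw [← pow_add, Nat.sub_add_cancel hm.le]
    simp_rw [prod_inv_distrib]
    rw [prod_prod_pow_mul_sub_pow_mul, prod_mul_distrib,
      prod_pow_eq_pow_sum, mul_inv, mul_pow, mul_pow, ← pow_mul, hpow]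
    field_simp
    ring
  have hcont : ContinuousAt
      (fun c => c ^ (b * N - m) * (F c * (D c)⁻¹ * (σ * ∏ k ∈ S, u k) ^ N)) 0 := by
    have : ContinuousAt D 0 := by fun_prop
    fun_prop (disch := exact hD₀)
  have hlim := hcont.tendsto
  rw [zero_pow (Nat.sub_ne_zero_of_lt hm), zero_mul] at hlim
  exact (hlim.mono_left nhdsWithin_le_nhds).congr'
    (eventually_nhdsWithin_of_forall fun c hc => (hfactor c hc).symm)

theorem Fin.append_const_mul_apply {α : Type*} [Monoid α] {m n : ℕ} (τ : Fin m → α)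
    (x : Fin n → α) (c : α) (k : Fin (m + n)) :
    Fin.append τ (fun i => c * x i) k = c ^ Fin.append (0 : Fin m → ℕ) 1 k * Fin.append τ x k := by
  induction k using Fin.addCases <;> simp

theorem Fin.append_ne_append_of_weight_eq {α : Type*} {m n : ℕ} {τ : Fin m → α} {x : Fin n → α}
    (hτ : Function.Injective τ) (hx : Function.Injective x) {k j : Fin (m + n)} (hkj : k ≠ j)
    (hw : Fin.append (0 : Fin m → ℕ) 1 k = Fin.append (0 : Fin m → ℕ) 1 j) :
    Fin.append τ x k ≠ Fin.append τ x j := by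
  induction k using Fin.addCases <;> induction j using Fin.addCases <;>
    simp_all [hτ.eq_iff, hx.eq_iff]

theorem Fin.append_ne_zero_of_weight_lt {α : Type*} [Zero α] {m n : ℕ} {τ : Fin m → α}
    (x : Fin n → α) (hτ : ∀ i, τ i ≠ 0) {k j : Fin (m + n)}
    (hw : Fin.append (0 : Fin m → ℕ) 1 k < Fin.append (0 : Fin m → ℕ) 1 j) :
    Fin.append τ x k ≠ 0 := by
  induction k using Fin.addCases <;> induction j using Fin.addCases <;> simp_all

theorem day_degenerate_contribution_vanishes_general
    (sk κ p q : ℕ)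
    (τ : Fin sk → ℂ) (hτ0 : ∀ j, τ j ≠ 0) (hτinj : Function.Injective τ)
    (x : Fin κ → ℂ) (hxinj : Function.Injective x)
    (ρ : ℂ) (δ : Fin p → ℂ)
    (γ : Fin q → ℂ)
    (M : Finset (Fin (sk + κ)))
    (hMc : ∃ i : Fin κ, Fin.natAdd sk i ∈ Mᶜ)
    (N : ℕ) (hN : κ ≤ N) :
    Tendsto
      (fun ε : ℝ =>
        let τε : Fin (sk + κ) → ℂ := Fin.append τ (fun i => (ε : ℂ) * x i)
        ((∏ k ∈ Mᶜ, ∏ m, (τε k - δ m)) *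
         (∏ l, ∏ j ∈ M, (γ l - τε j)) *
         (∏ l, ∏ m, (γ l - δ m)⁻¹) *
         (∏ k ∈ Mᶜ, ∏ j ∈ M, (τε k - τε j)⁻¹)) *
        ((-1 : ℂ) ^ (sk + κ - p) * ρ * ∏ k ∈ Mᶜ, τε k) ^ N)
      (nhdsWithin (0 : ℝ) (Set.Ioi 0)) (nhds 0) := by
  set w := Fin.append (0 : Fin sk → ℕ) 1
  have hw : ∑ j ∈ M, w j + ∑ k ∈ Mᶜ, w k = κ := by
    rw [sum_add_sum_compl, Fin.sum_univ_add]
    simp [w]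
  have hMc_pos : 1 ≤ ∑ k ∈ Mᶜ, w k := by
    obtain ⟨i, hi⟩ := hMc
    simpa [w] using single_le_sum (fun k _ => Nat.zero_le (w k)) hi
  have hofReal : Tendsto (fun ε : ℝ => (ε : ℂ)) (𝓝[>] 0) (𝓝[≠] 0) :=
    Complex.continuous_ofReal.continuousWithinAt.tendsto_nhdsWithin fun ε hε => by
      simpa using hε.ne'
  simp only [Fin.append_const_mul_apply]
  exact (tendsto_mul_prod_inv_sub_mul_pow_prod_nhdsNE
    (fun c => (∏ k ∈ Mᶜ, ∏ m, (c ^ w k * Fin.append τ x k - δ m)) *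
      (∏ l, ∏ j ∈ M, (γ l - c ^ w j * Fin.append τ x j)) * ∏ l, ∏ m, (γ l - δ m)⁻¹)
    (by fun_prop) Mᶜ M w (Fin.append τ x) disjoint_compl_left
    (fun k j hkj => Fin.append_ne_append_of_weight_eq hτinj hxinj hkj)
    (fun k j => Fin.append_ne_zero_of_weight_lt x hτ0) _ N hMc_pos (by omega)).comp hofReal

/-- **Lemma 1**: vanishing of degenerate contributions in the `ε → 0⁺` limit of Day's
formula.  We write `s = sk + κ`, with `τ_1, …, τ_{sk}` the fixed nonzero pairwise distinct
zeros and `ε·x_1, …, ε·x_κ` the zeros tending to `0`.  If the complement `Mᶜ` contains at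
least one index from the second block, then for every `N ≥ κ` the contribution
`C_M(ε) · r_M(ε)^N` tends to `0` as `ε → 0⁺`. -/
theorem day_degenerate_contribution_vanishes
    (sk κ p q : ℕ) (hp : 1 ≤ p) (hq : 1 ≤ q) (hκ : 1 ≤ κ) (hs : p + q ≤ sk + κ)
    (τ : Fin sk → ℂ) (hτ0 : ∀ j, τ j ≠ 0) (hτinj : Function.Injective τ)
    (x : Fin κ → ℂ) (hx0 : ∀ i, x i ≠ 0) (hxinj : Function.Injective x)
    (ρ : ℂ) (δ : Fin p → ℂ) (hδ : ∀ m, ‖δ m‖ < 1)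
    (γ : Fin q → ℂ) (hγ : ∀ l, 1 < ‖γ l‖)
    (M : Finset (Fin (sk + κ))) (hM : M.card = p)
    (hMc : ∃ i : Fin κ, Fin.natAdd sk i ∈ Mᶜ)
    (N : ℕ) (hN : κ ≤ N) :
    Tendsto
      (fun ε : ℝ =>
        let τε : Fin (sk + κ) → ℂ := Fin.append τ (fun i => (ε : ℂ) * x i)
        ((∏ k ∈ Mᶜ, ∏ m, (τε k - δ m)) *
         (∏ l, ∏ j ∈ M, (γ l - τε j)) *
         (∏ l, ∏ m, (γ l - δ m)⁻¹) *
         (∏ k ∈ Mᶜ, ∏ j ∈ M, (τε k - τε j)⁻¹)) *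
        ((-1 : ℂ) ^ (sk + κ - p) * ρ * ∏ k ∈ Mᶜ, τε k) ^ N)
      (nhdsWithin (0 : ℝ) (Set.Ioi 0)) (nhds 0) :=
  day_degenerate_contribution_vanishes_general sk κ p q τ hτ0 hτinj x hxinj ρ δ γ M hMc N hN
end

section
/- Entanglement spectrum for an AIII example (Section 5.3). Let b ∈ ℂ with 0 < |b| < 1, let u(z) = (z − b)/(1 − conj(b)·z), and for λ ∈ ℂ let Φ_λ be the 2×2-matrix-valued symbol on the unit circle with Φ_λ(e^{iθ}) = [[λ, −u(e^{iθ})], [−1/u(e^{iθ}), λ]]. Then for every integer N ≥ 1 and every λ ∈ ℂ, D_N[Φ_λ] = (λ² − 1)^{N−1} · (λ² − |b|^{2N}). (This is the characteristic polynomial det(λ − Â_N) of the matrix Â_N = 1 − 2C_N built from the fermionic correlation matrix C_N of a subsystem of N unit cells of the AIII chain with f(z) = z^{-1}(z−b)².) -/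
open scoped BigOperators
open Filter

/-- The `k`-th (matrix) Fourier coefficient of a `2 × 2`-matrix-valued symbol. -/
noncomputable def blockSymbolCoeff (Φ : ℂ → Matrix (Fin 2) (Fin 2) ℂ) (k : ℤ) :
    Matrix (Fin 2) (Fin 2) ℂ :=
  Matrix.of fun i j => symbolCoeff (fun w => Φ w i j) k

/-- The `2N × 2N` block Toeplitz determinant `D_N[Φ]` generated by the
`2 × 2`-matrix-valued symbol `Φ`. -/
noncomputable def blockToeplitzDet (Φ : ℂ → Matrix (Fin 2) (Fin 2) ℂ) (N : ℕ) : ℂ :=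
  Matrix.det (Matrix.of fun p q : Fin N × Fin 2 =>
    blockSymbolCoeff Φ ((p.1 : ℤ) - (q.1 : ℤ)) p.2 q.2)

/-
On the unit circle the Blaschke factor `u(z) = (z - b) / (1 - b̄ z)` is unimodular, so `1 / u = ū`,
and its Taylor series `∑ aₙ zⁿ`, with `a₀ = -b` and `aₙ = (1 - |b|²) b̄ⁿ⁻¹` for `n ≥ 1`, converges
absolutely there. Hence the Toeplitz matrix of `u` is the lower triangular Toeplitz matrix `L` of
the `aₙ`, that of `1 / u` is `L*`, and `D_N[Φ_λ] = det [[λ, -L], [-L*, λ]] = det (λ² - L L*)`.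
The entries of `L L*` satisfy `(L L*)_{m+1,n+1} = (L L*)_{m,n} + a_{m+1} ā_{n+1}`, and induction
gives the rank-one perturbation `L L* = 1 - (1 - |b|²) v v*` with `v_m = b̄ᵐ`. The matrix
determinant lemma then yields
`(λ² - 1)^{N-1} (λ² - 1 + (1 - |b|²) ∑_{m<N} |b|^{2m}) = (λ² - 1)^{N-1} (λ² - |b|^{2N})`.
-/

open Complex Matrix Finset intervalIntegral
open scoped ComplexConjugate

theorem integral_exp_int_mul_I (m : ℤ) :
    ∫ θ in (0:ℝ)..2 * Real.pi, exp (m * (θ * I)) =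
      if m = 0 then ((2 * Real.pi : ℝ) : ℂ) else 0 := by
  split_ifs with hm
  · simp [hm]
  · have hc : (m : ℂ) * I ≠ 0 := by simp [hm, I_ne_zero]
    simp_rw [← mul_assoc, mul_right_comm _ _ I]
    rw [integral_exp_mul_complex hc]
    have : exp (m * I * ((2 * Real.pi : ℝ) : ℂ)) = 1 := by
      rw [← exp_int_mul_two_pi_mul_I m]; push_cast; ring_nf
    push_cast at this ⊢
    simp [this]

theorem symbolCoeff_eq_of_hasSum {t : ℂ → ℂ} {a : ℤ → ℂ} (ha : Summable fun n => ‖a n‖)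
    (ht : ∀ z : ℂ, ‖z‖ = 1 → HasSum (fun n => a n * z ^ n) (t z)) (k : ℤ) :
    symbolCoeff t k = a k := by
  have hsum : HasSum (fun n => ∫ θ in (0:ℝ)..2 * Real.pi, a n * exp ((n - k : ℤ) * (θ * I)))
      (∫ θ in (0:ℝ)..2 * Real.pi, t (exp (I * θ)) * exp (-(I * k * θ))) := by
    refine hasSum_integral_of_dominated_convergence (fun n _ => ‖a n‖) ?_ ?_ ?_ ?_ ?_
    · exact fun n => Continuous.aestronglyMeasurable (by fun_prop)
    · refine fun n => .of_forall fun θ _ => ?_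
      rw [norm_mul, ← ofReal_intCast, ← mul_assoc, ← ofReal_mul, norm_exp_ofReal_mul_I, mul_one]
    · exact .of_forall fun _ _ => ha
    · exact intervalIntegrable_const
    · refine .of_forall fun θ _ => ?_
      have hexp (n : ℤ) : exp ((n - k : ℤ) * (θ * I)) = exp (I * θ) ^ n * exp (-(I * k * θ)) := by
        rw [← exp_int_mul, ← exp_add]; push_cast; ring_nf
      simp_rw [hexp, ← mul_assoc]
      exact (ht _ (by rw [mul_comm]; exact norm_exp_ofReal_mul_I θ)).mul_right _
  have hterm (n : ℤ) : ∫ θ in (0:ℝ)..2 * Real.pi, a n * exp ((n - k : ℤ) * (θ * I)) =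
      if n = k then ((2 * Real.pi : ℝ) : ℂ) * a k else 0 := by
    rw [integral_const_mul, integral_exp_int_mul_I]
    rcases eq_or_ne n k with rfl | h
    · simp [mul_comm]
    · simp [h, sub_eq_zero]
  rw [funext hterm] at hsum
  rw [symbolCoeff, hsum.unique (hasSum_ite_eq k _)]
  push_cast
  field_simp

theorem symbolCoeff_congr_s15 {t s : ℂ → ℂ} (h : ∀ z : ℂ, ‖z‖ = 1 → t z = s z) (k : ℤ) :
    symbolCoeff t k = symbolCoeff s k := by
  unfold symbolCoeff
  congr 1
  refine integral_congr fun θ _ => ?_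
  rw [h _ (by rw [mul_comm]; exact norm_exp_ofReal_mul_I θ)]

theorem symbolCoeff_const (c : ℂ) (k : ℤ) :
    symbolCoeff (fun _ => c) k = if k = 0 then c else 0 :=
  symbolCoeff_eq_of_hasSum (t := fun _ => c) (a := fun n => if n = 0 then c else 0)
    (summable_of_ne_finset_zero (s := {0}) (by simp_all))
    (fun _ _ => by convert hasSum_ite_eq (0 : ℤ) c using 2 with n; split_ifs <;> simp_all) k

theorem symbolCoeff_neg (t : ℂ → ℂ) (k : ℤ) :
    symbolCoeff (fun z => -t z) k = -symbolCoeff t k := by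
  simp [symbolCoeff, integral_neg]

theorem symbolCoeff_conj (t : ℂ → ℂ) (k : ℤ) :
    symbolCoeff (fun z => conj (t z)) k = conj (symbolCoeff t (-k)) := by
  have h2π : 0 ≤ 2 * Real.pi := by positivity
  simp only [symbolCoeff, map_mul, integral_of_le h2π, ← integral_conj, ← exp_conj, map_neg,
    conj_I, conj_ofReal, map_intCast, map_div₀, map_one, map_ofNat, Int.cast_neg]
  congr 2 with θ
  ring_nf

noncomputable def toeplitzMatrix (t : ℂ → ℂ) (N : ℕ) : Matrix (Fin N) (Fin N) ℂ :=
  of fun m n => symbolCoeff t ((m : ℤ) - n)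

def lowerToeplitz {R : Type*} [Zero R] (a : ℕ → R) (N : ℕ) : Matrix (Fin N) (Fin N) R :=
  of fun m n => if n ≤ m then a (m - n) else 0

theorem toeplitzMatrix_eq_lowerToeplitz {t : ℂ → ℂ} {a : ℕ → ℂ} (ha : Summable fun n => ‖a n‖)
    (ht : ∀ z : ℂ, ‖z‖ = 1 → HasSum (fun n => a n * z ^ n) (t z)) (N : ℕ) :
    toeplitzMatrix t N = lowerToeplitz a N := by
  set a' : ℤ → ℂ := Function.extend ((↑) : ℕ → ℤ) a 0
  have hinj : Function.Injective ((↑) : ℕ → ℤ) := Nat.cast_injective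
  have hcoe (n : ℕ) : a' n = a n := hinj.extend_apply a 0 n
  have hout {k : ℤ} (hk : k ∉ Set.range ((↑) : ℕ → ℤ)) : a' k = 0 :=
    Function.extend_apply' _ _ _ hk
  have hcoeff : ∀ k, symbolCoeff t k = a' k := by
    refine symbolCoeff_eq_of_hasSum ?_ fun z hz => ?_
    · rw [← hinj.summable_iff fun k hk => by simp [hout hk]]
      simpa [Function.comp_def, hcoe] using ha
    · rw [← hinj.hasSum_iff fun k hk => by simp [hout hk]]
      simpa [Function.comp_def, hcoe] using ht z hz
  ext m n
  simp only [toeplitzMatrix, lowerToeplitz, of_apply, hcoeff]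
  split_ifs with h
  · rw [← hcoe]; congr 1; omega
  · exact hout (by rintro ⟨j, hj⟩; omega)

theorem toeplitzMatrix_const (c : ℂ) (N : ℕ) : toeplitzMatrix (fun _ => c) N = c • 1 := by
  ext m n
  simp [toeplitzMatrix, symbolCoeff_const, one_apply, sub_eq_zero, Fin.val_inj]

theorem toeplitzMatrix_neg (t : ℂ → ℂ) (N : ℕ) :
    toeplitzMatrix (fun z => -t z) N = -toeplitzMatrix t N := by
  ext m n
  simp [toeplitzMatrix, symbolCoeff_neg]

theorem toeplitzMatrix_conj (t : ℂ → ℂ) (N : ℕ) :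
    toeplitzMatrix (fun z => conj (t z)) N = (toeplitzMatrix t N)ᴴ := by
  ext m n
  simp [toeplitzMatrix, symbolCoeff_conj]

theorem toeplitzMatrix_congr {t s : ℂ → ℂ} (h : ∀ z : ℂ, ‖z‖ = 1 → t z = s z) (N : ℕ) :
    toeplitzMatrix t N = toeplitzMatrix s N := by
  ext m n
  exact symbolCoeff_congr_s15 h _

theorem blockToeplitzDet_eq_det_fromBlocks (Φ : ℂ → Matrix (Fin 2) (Fin 2) ℂ) (N : ℕ) :
    blockToeplitzDet Φ N = (fromBlocks
      (toeplitzMatrix (fun z => Φ z 0 0) N) (toeplitzMatrix (fun z => Φ z 0 1) N)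
      (toeplitzMatrix (fun z => Φ z 1 0) N) (toeplitzMatrix (fun z => Φ z 1 1) N)).det := by
  let e : Fin N ⊕ Fin N ≃ Fin N × Fin 2 :=
    (Equiv.boolProdEquivSum (Fin N)).symm.trans
      ((finTwoEquiv.symm.prodCongr (Equiv.refl _)).trans (Equiv.prodComm _ _))
  rw [blockToeplitzDet, ← det_submatrix_equiv_self e]
  congr 1
  ext (i | i) (j | j) <;> rfl

theorem det_fromBlocks_smul_one {n : Type*} [Fintype n] [DecidableEq n]
    (P Q : Matrix n n ℂ) (x : ℂ) :
    (fromBlocks (x • 1) P Q (x • 1)).det = (x ^ 2 • 1 - P * Q).det := by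
  suffices (fun x : ℂ => (fromBlocks (x • 1) P Q (x • 1)).det) =
      fun x => (x ^ 2 • 1 - P * Q).det from congrFun this x
  refine Continuous.ext_on (dense_compl_singleton 0) (by fun_prop) (by fun_prop) fun x hx => ?_
  have hx : x ≠ 0 := hx
  let : Invertible (x • (1 : Matrix n n ℂ)) :=
    ⟨x⁻¹ • 1, by simp [smul_smul, hx], by simp [smul_smul, hx]⟩
  rw [det_fromBlocks₂₂, ← det_mul]
  change (x • 1 * (x • 1 - P * (x⁻¹ • 1) * Q)).det = _
  simp [mul_sub, smul_smul, hx, pow_two]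

theorem det_smul_one_add_vecMulVec {n : Type*} [Fintype n] [DecidableEq n] [Nonempty n]
    (u w : n → ℂ) (μ : ℂ) :
    (μ • 1 + vecMulVec u w).det = μ ^ (Fintype.card n - 1) * (μ + w ⬝ᵥ u) := by
  suffices (fun μ : ℂ => (μ • 1 + vecMulVec u w).det) =
      fun μ => μ ^ (Fintype.card n - 1) * (μ + w ⬝ᵥ u) from congrFun this μ
  refine Continuous.ext_on (dense_compl_singleton 0) (by fun_prop) (by fun_prop) fun μ hμ => ?_
  have hμ : μ ≠ 0 := hμ
  have : μ • 1 + vecMulVec u w = μ • (1 + vecMulVec (μ⁻¹ • u) w) := by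
    rw [smul_add, smul_vecMulVec, smul_smul, mul_inv_cancel₀ hμ, one_smul]
  rw [this, det_smul, vecMulVec_eq (Fin 1), det_one_add_replicateCol_mul_replicateRow,
    dotProduct_smul, ← mul_pow_sub_one Fintype.card_ne_zero, smul_eq_mul]
  field_simp

section Correlation

variable {R : Type*} [Semiring R] [StarRing R]

def partialCorrelation (a : ℕ → R) (m n : ℕ) : R :=
  ∑ p ∈ range (m + 1), if p ≤ n then a (m - p) * star (a (n - p)) else 0

theorem partialCorrelation_zero_left (a : ℕ → R) (n : ℕ) :
    partialCorrelation a 0 n = a 0 * star (a n) := by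
  simp [partialCorrelation]

theorem partialCorrelation_zero_right (a : ℕ → R) (m : ℕ) :
    partialCorrelation a m 0 = a m * star (a 0) := by
  simp [partialCorrelation]

theorem partialCorrelation_succ_succ (a : ℕ → R) (m n : ℕ) :
    partialCorrelation a (m + 1) (n + 1) =
      a (m + 1) * star (a (n + 1)) + partialCorrelation a m n := by
  rw [partialCorrelation, sum_range_succ', add_comm]
  simp [partialCorrelation]

theorem lowerToeplitz_mul_conjTranspose_apply (a : ℕ → R) {N : ℕ} (m n : Fin N) :
    (lowerToeplitz a N * (lowerToeplitz a N)ᴴ) m n = partialCorrelation a m n := by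
  let f (p : ℕ) := (if p ≤ m then a (m - p) else 0) * star (if p ≤ n then a (n - p) else 0)
  have hsum : ∑ p : Fin N, f p = ∑ p ∈ range N, f p := Fin.sum_univ_eq_sum_range f N
  have hsub : range (m + 1) ⊆ range N := range_subset_range.2 m.isLt
  rw [mul_apply, partialCorrelation]
  convert hsum.trans (sum_subset hsub fun p _ hp => ?_).symm using 1
  · simp [f, lowerToeplitz]
  · refine sum_congr rfl fun p hp => ?_
    simp only [f, if_pos (Nat.le_of_lt_succ (mem_range.1 hp))]
    split_ifs <;> simp
  · have : ¬p ≤ m := by rw [mem_range] at hp; omega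
    simp [f, this]

end Correlation

noncomputable def blaschkeCoeff (b : ℂ) : ℕ → ℂ
  | 0 => -b
  | n + 1 => (1 - ‖b‖ ^ 2) * conj b ^ n

theorem summable_norm_blaschkeCoeff {b : ℂ} (hb : ‖b‖ < 1) :
    Summable fun n => ‖blaschkeCoeff b n‖ := by
  rw [← summable_nat_add_iff 1]
  simpa [blaschkeCoeff] using (summable_geometric_of_lt_one (norm_nonneg b) hb).mul_left
    ‖(1 : ℂ) - ‖b‖ ^ 2‖

theorem blaschke_inv_eq_conj {b z : ℂ} (hb : ‖b‖ ≠ 1) (hz : ‖z‖ = 1) :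
    ((z - b) / (1 - conj b * z))⁻¹ = conj ((z - b) / (1 - conj b * z)) := by
  refine inv_eq_conj ?_
  have hzb : z - b ≠ 0 := fun h => hb (by rw [← sub_eq_zero.1 h, hz])
  have : 1 - conj b * z = z * conj (z - b) := by
    rw [map_sub, mul_sub, mul_conj', hz]; push_cast; ring
  rw [norm_div, this, norm_mul, hz, one_mul, norm_conj, div_self (norm_ne_zero_iff.2 hzb)]

theorem partialCorrelation_blaschkeCoeff (b : ℂ) (m n : ℕ) :
    partialCorrelation (blaschkeCoeff b) m n =
      (if m = n then 1 else 0) - (1 - ‖b‖ ^ 2) * (conj b ^ m * b ^ n) := by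
  have hb : conj b * b = ‖b‖ ^ 2 := conj_mul' b
  induction m generalizing n with
  | zero =>
    cases n with
    | zero =>
      simp only [partialCorrelation_zero_left, blaschkeCoeff, star_neg, RCLike.star_def,
        neg_mul_neg, if_pos, pow_zero, mul_one, sub_sub_cancel]
      linear_combination hb
    | succ n =>
      simp only [partialCorrelation_zero_left, blaschkeCoeff, star_mul', star_sub, star_one,
        star_pow, RCLike.star_def, conj_ofReal, conj_conj, Nat.zero_ne_add_one, if_false]
      ring
  | succ m ih =>
    cases n with
    | zero =>
      simp only [partialCorrelation_zero_right, blaschkeCoeff, star_neg, RCLike.star_def,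
        Nat.add_one_ne_zero, if_false]
      ring
    | succ n =>
      simp only [partialCorrelation_succ_succ, ih, blaschkeCoeff, star_mul', star_sub, star_one,
        star_pow, RCLike.star_def, conj_ofReal, conj_conj, Nat.add_right_cancel_iff]
      linear_combination (1 - ‖b‖ ^ 2) * conj b ^ m * b ^ n * hb

theorem hasSum_blaschkeCoeff {b z : ℂ} (hbz : ‖b‖ * ‖z‖ < 1) :
    HasSum (fun n => blaschkeCoeff b n * z ^ n) ((z - b) / (1 - conj b * z)) := by
  have hbz' : ‖conj b * z‖ < 1 := by simpa using hbz
  have hne : 1 - conj b * z ≠ 0 := by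
    intro h
    rw [← sub_eq_zero.1 h, norm_one] at hbz'
    exact lt_irrefl _ hbz'
  refine (hasSum_nat_add_iff' 1).mp ?_
  have htail : (fun n => blaschkeCoeff b (n + 1) * z ^ (n + 1)) =
      fun n => (1 - ‖b‖ ^ 2) * z * (conj b * z) ^ n := by
    funext n
    simp only [blaschkeCoeff]
    ring
  have hhead : (z - b) / (1 - conj b * z) - ∑ i ∈ range 1, blaschkeCoeff b i * z ^ i =
      (1 - ‖b‖ ^ 2) * z * (1 - conj b * z)⁻¹ := by
    rw [sum_range_one, pow_zero, mul_one, ← conj_mul', div_sub' hne, div_eq_mul_inv]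
    simp only [blaschkeCoeff]
    ring
  rw [htail, hhead]
  exact (hasSum_geometric_of_norm_lt_one hbz').mul_left _

theorem toeplitzMatrix_blaschke {b : ℂ} (hb : ‖b‖ < 1) (N : ℕ) :
    toeplitzMatrix (fun w => (w - b) / (1 - conj b * w)) N = lowerToeplitz (blaschkeCoeff b) N :=
  toeplitzMatrix_eq_lowerToeplitz (summable_norm_blaschkeCoeff hb)
    (fun z hz => hasSum_blaschkeCoeff (by rwa [hz, mul_one])) N

theorem toeplitzMatrix_neg_blaschke_inv {b : ℂ} (hb : ‖b‖ < 1) (N : ℕ) :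
    toeplitzMatrix (fun w => -((w - b) / (1 - conj b * w))⁻¹) N =
      -(lowerToeplitz (blaschkeCoeff b) N)ᴴ := by
  rw [toeplitzMatrix_congr (s := fun w => conj (-((w - b) / (1 - conj b * w))))
    fun z hz => by rw [map_neg, blaschke_inv_eq_conj hb.ne hz], toeplitzMatrix_conj,
    toeplitzMatrix_neg, toeplitzMatrix_blaschke hb, conjTranspose_neg]

theorem lowerToeplitz_blaschkeCoeff_mul_conjTranspose (b : ℂ) (N : ℕ) :
    lowerToeplitz (blaschkeCoeff b) N * (lowerToeplitz (blaschkeCoeff b) N)ᴴ =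
      1 - (1 - ‖b‖ ^ 2 : ℂ) • vecMulVec (fun m : Fin N => conj b ^ (m : ℕ))
        (star fun m : Fin N => conj b ^ (m : ℕ)) := by
  ext m n
  rw [lowerToeplitz_mul_conjTranspose_apply, partialCorrelation_blaschkeCoeff]
  simp [one_apply, Fin.val_inj, vecMulVec_apply]

theorem aiii_example_char_poly_general
    (b : ℂ) (hb1 : ‖b‖ < 1)
    (N : ℕ) (hN : 1 ≤ N) (lam : ℂ) :
    blockToeplitzDet
      (fun w => !![lam, -((w - b) / (1 - (starRingEnd ℂ) b * w));
                   -(((w - b) / (1 - (starRingEnd ℂ) b * w))⁻¹), lam]) N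
      = (lam ^ 2 - 1) ^ (N - 1) * (lam ^ 2 - ((‖b‖ ^ (2 * N) : ℝ) : ℂ)) := by
  have : Nonempty (Fin N) := ⟨⟨0, hN⟩⟩
  set v : Fin N → ℂ := fun m => conj b ^ (m : ℕ)
  set γ : ℂ := 1 - ‖b‖ ^ 2
  have hgeom : γ * (star v ⬝ᵥ v) = 1 - ((‖b‖ ^ (2 * N) : ℝ) : ℂ) := by
    have : star v ⬝ᵥ v = ∑ i ∈ range N, ((‖b‖ : ℂ) ^ 2) ^ i := by
      rw [dotProduct, ← Fin.sum_univ_eq_sum_range]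
      simp [v, ← mul_pow, mul_conj']
    rw [this, mul_neg_geom_sum, pow_mul]
    push_cast
    rfl
  rw [blockToeplitzDet_eq_det_fromBlocks]
  simp only [of_apply, cons_val', cons_val_zero, cons_val_one, empty_val', cons_val_fin_one]
  rw [toeplitzMatrix_const, toeplitzMatrix_neg, toeplitzMatrix_blaschke hb1,
    toeplitzMatrix_neg_blaschke_inv hb1, det_fromBlocks_smul_one, neg_mul_neg,
    lowerToeplitz_blaschkeCoeff_mul_conjTranspose,
    show lam ^ 2 • 1 - (1 - γ • vecMulVec v (star v)) =
      (lam ^ 2 - 1) • 1 + vecMulVec (γ • v) (star v) by rw [smul_vecMulVec]; module,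
    det_smul_one_add_vecMulVec, Fintype.card_fin, dotProduct_smul, smul_eq_mul, hgeom]
  ring

/-- Section 5.3 example: entanglement spectrum of the AIII chain with
`f(z) = z⁻¹(z−b)²`, `0 < |b| < 1`.  The characteristic polynomial of `Â_N = 1 − 2C_N`
is `(λ² − 1)^{N−1}(λ² − |b|^{2N})`. -/
theorem aiii_example_char_poly
    (b : ℂ) (hb0 : 0 < ‖b‖) (hb1 : ‖b‖ < 1)
    (N : ℕ) (hN : 1 ≤ N) (lam : ℂ) :
    blockToeplitzDet
      (fun w => !![lam, -((w - b) / (1 - (starRingEnd ℂ) b * w));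
                   -(((w - b) / (1 - (starRingEnd ℂ) b * w))⁻¹), lam]) N
      = (lam ^ 2 - 1) ^ (N - 1) * (lam ^ 2 - ((‖b‖ ^ (2 * N) : ℝ) : ℂ)) :=
  aiii_example_char_poly_general b hb1 N hN lam
end
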